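/- arXiv:1911.01631 — 6 statements merged into one kernel-verified Lean document; each statement's English description precedes it below -/
import Mathlib

section
/- Let A : [0,∞) → (ℤ/Nℤ → ℂ) be a continuously differentiable solution of the damped, driven discrete nonlinear Schrödinger equation. Then for all τ ≥ 0 one has the a priori bound ‖A(τ)‖² ≤ N·ĥ²/α̂² + ‖A(0)‖²·e^{−α̂ τ}; in particular ‖A(τ)‖ is bounded uniformly in τ by a constant depending only on ‖A(0)‖, ĥ, α̂ and N. -/
open Complex Finset Set

noncomputable section

/-- Discrete Laplacian with periodic boundary conditions on `ZMod N` (complex-valued). -/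
def lapC {N : ℕ} (B : ZMod N → ℂ) (j : ZMod N) : ℂ :=
  B (j + 1) - 2 * B j + B (j - 1)

/-- ℓ² norm on `ZMod N` (complex-valued sequences). -/
def l2C {N : ℕ} [NeZero N] (B : ZMod N → ℂ) : ℝ :=
  Real.sqrt (∑ j, ‖B j‖ ^ 2)

/-- Discrete Laplacian with periodic boundary conditions on `ZMod N` (real-valued). -/
def lapR {N : ℕ} (B : ZMod N → ℝ) (j : ZMod N) : ℝ :=
  B (j + 1) - 2 * B j + B (j - 1)

/-- ℓ² norm on `ZMod N` (real-valued sequences). -/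
def l2R {N : ℕ} [NeZero N] (B : ZMod N → ℝ) : ℝ :=
  Real.sqrt (∑ j, (B j) ^ 2)

/-- `A` solves the damped, driven discrete nonlinear Schrödinger equation
`i A_j' + 3ξ|A_j|²A_j − (Δ₂A)_j + i α̂ A_j − ĥ + ω A_j = 0` at every `τ ∈ s`,
with derivatives taken within `s`. -/
def SolvesDNLSOn {N : ℕ} (ξ a h ω : ℝ) (A : ℝ → ZMod N → ℂ) (s : Set ℝ) : Prop :=
  ∀ τ ∈ s, ∀ j, ∃ d : ℂ, HasDerivWithinAt (fun t => A t j) d s τ ∧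
    Complex.I * d + 3 * (ξ : ℂ) * ((‖A τ j‖ : ℂ)) ^ 2 * A τ j
      - lapC (A τ) j + Complex.I * (a : ℂ) * A τ j - (h : ℂ) + (ω : ℂ) * A τ j = 0

/-- `A` solves the damped, driven discrete nonlinear Schrödinger equation globally. -/
def SolvesDNLS {N : ℕ} (ξ a h ω : ℝ) (A : ℝ → ZMod N → ℂ) : Prop :=
  ∀ τ : ℝ, ∀ j, ∃ d : ℂ, HasDerivAt (fun t => A t j) d τ ∧
    Complex.I * d + 3 * (ξ : ℂ) * ((‖A τ j‖ : ℂ)) ^ 2 * A τ j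
      - lapC (A τ) j + Complex.I * (a : ℂ) * A τ j - (h : ℂ) + (ω : ℂ) * A τ j = 0

/-- The real-valued rotating-wave (leading-order) approximation
`X_j(t) = 2 Re(√ε A_j(εt/2) e^{iΩt}) + (ξ ε^{3/2}/4) Re(A_j(εt/2)³ e^{3iΩt})`
with `Ω = 1 − εω/2`. -/
def Xrw {N : ℕ} (ξ ω ε : ℝ) (A : ℝ → ZMod N → ℂ) (t : ℝ) (j : ZMod N) : ℝ :=
  2 * ((Real.sqrt ε : ℂ) * A (ε * t / 2) j
        * Complex.exp (Complex.I * (((1 - ε * ω / 2) * t : ℝ) : ℂ))).re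
    + (ξ * ε ^ ((3:ℝ)/2) / 4) * ((A (ε * t / 2) j) ^ 3
        * Complex.exp (3 * Complex.I * (((1 - ε * ω / 2) * t : ℝ) : ℂ))).re

lemma lap_im_sum (N : ℕ) [NeZero N] (B : ZMod N → ℂ) :
    ∑ j, ((starRingEnd ℂ) (B j) * lapC B j).im = 0 := by
  have hsplit : ∀ j : ZMod N, ((starRingEnd ℂ) (B j) * lapC B j).im
      = ((starRingEnd ℂ) (B j) * B (j+1)).im + ((starRingEnd ℂ) (B j) * B (j-1)).im := by
    intro j
    have h2 : ((starRingEnd ℂ) (B j) * (2 * B j)).im = 0 := by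
      simp [Complex.mul_im, Complex.conj_re, Complex.conj_im]; ring
    simp only [lapC, mul_add, mul_sub, Complex.add_im, Complex.sub_im]
    rw [h2]; ring
  rw [Finset.sum_congr rfl (fun j _ => hsplit j), Finset.sum_add_distrib]
  have hre : ∑ j : ZMod N, ((starRingEnd ℂ) (B j) * B (j-1)).im
      = ∑ j : ZMod N, ((starRingEnd ℂ) (B (j+1)) * B j).im := by
    apply Fintype.sum_equiv (Equiv.subRight (1 : ZMod N))
    intro j; simp
  have hneg : ∀ j : ZMod N, ((starRingEnd ℂ) (B (j+1)) * B j).im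
      = -((starRingEnd ℂ) (B j) * B (j+1)).im := by
    intro j; simp [Complex.mul_im, Complex.conj_re, Complex.conj_im]; ring
  rw [hre, Finset.sum_congr rfl (fun j _ => hneg j), Finset.sum_neg_distrib]
  ring

lemma perj_algebra (ξ a h ω : ℝ) (z L d : ℂ)
    (hd : Complex.I * d + 3 * (ξ:ℂ) * ((‖z‖ : ℂ))^2 * z - L
        + Complex.I * a * z - h + ω * z = 0) :
    2 * ((starRingEnd ℂ) z * d).re
      = -2*a*‖z‖^2 - 2*h*z.im + 2*((starRingEnd ℂ) z * L).im := by
  have hd' : d = Complex.I * (3 * (ξ:ℂ) * ((‖z‖ : ℂ))^2 * z - L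
      + Complex.I * a * z - h + ω * z) := by
    linear_combination (-Complex.I) * hd + d * Complex.I_sq
  have hr : (‖z‖)^2 = z.re^2 + z.im^2 := by
    rw [Complex.sq_norm, Complex.normSq_apply]; ring
  subst hd'
  rw [show ((‖z‖ : ℂ))^2 = ((‖z‖ ^ 2 : ℝ) : ℂ) by push_cast; ring]
  simp only [Complex.mul_re, Complex.mul_im, Complex.conj_re, Complex.conj_im, Complex.I_re,
    Complex.I_im, Complex.ofReal_re, Complex.ofReal_im, Complex.sub_re, Complex.sub_im,
    Complex.add_re, Complex.add_im, hr, Complex.re_ofNat, Complex.im_ofNat]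
  ring


/-- a priori bound `‖A(τ)‖² ≤ N ĥ²/α̂² + ‖A(0)‖² e^{−α̂ τ}` for solutions
of the damped, driven DNLS equation. -/
theorem stmt_2 (N : ℕ) [NeZero N] (ξ a h ω : ℝ) (ha : 0 < a)
    (A : ℝ → ZMod N → ℂ)
    (hreg : ∀ j, ContDiffOn ℝ 1 (fun t => A t j) (Set.Ici 0))
    (hsol : SolvesDNLSOn ξ a h ω A (Set.Ici 0)) :
    ∀ τ : ℝ, 0 ≤ τ →
      (∑ j, ‖A τ j‖ ^ 2) ≤
        N * h ^ 2 / a ^ 2 + (∑ j, ‖A 0 j‖ ^ 2) * Real.exp (-a * τ) := by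
  classical
  choose! d hd heq using hsol
  set E : ℝ → ℝ := fun t => ∑ j, ‖A t j‖ ^ 2 with hE_def
  set C : ℝ := (N : ℝ) * h ^ 2 / a ^ 2 with hC_def
  -- derivative of E
  have hEd : ∀ τ ∈ Set.Ici (0:ℝ),
      HasDerivWithinAt E (∑ j, 2 * ((starRingEnd ℂ) (A τ j) * d τ j).re) (Set.Ici 0) τ := by
    intro τ hτ
    have key : HasDerivWithinAt (fun t => ∑ j, ((A t j).re ^ 2 + (A t j).im ^ 2))
        (∑ j, (2 * (A τ j).re * (d τ j).re + 2 * (A τ j).im * (d τ j).im))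
        (Set.Ici 0) τ := by
      apply HasDerivWithinAt.fun_sum
      intro j _
      have hdj := hd τ hτ j
      have h1 : HasDerivWithinAt (fun t => (A t j).re) (d τ j).re (Set.Ici 0) τ :=
        (Complex.reCLM.hasFDerivAt.comp_hasDerivWithinAt τ hdj : )
      have h2 : HasDerivWithinAt (fun t => (A t j).im) (d τ j).im (Set.Ici 0) τ :=
        (Complex.imCLM.hasFDerivAt.comp_hasDerivWithinAt τ hdj : )
      have := (h1.fun_pow 2).fun_add (h2.fun_pow 2)
      simpa [mul_comm, mul_assoc, mul_left_comm, pow_one] using this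
    have hfun : E = fun t => ∑ j, ((A t j).re ^ 2 + (A t j).im ^ 2) := by
      funext t
      refine Finset.sum_congr rfl fun j _ => ?_
      rw [Complex.sq_norm, Complex.normSq_apply]; ring
    have hval : (∑ j, 2 * ((starRingEnd ℂ) (A τ j) * d τ j).re)
        = ∑ j, (2 * (A τ j).re * (d τ j).re + 2 * (A τ j).im * (d τ j).im) := by
      refine Finset.sum_congr rfl fun j _ => ?_
      simp [Complex.mul_re, Complex.conj_re, Complex.conj_im]; ring
    rw [hfun, hval]; exact key
  -- rewrite the derivative using the equation
  have hval2 : ∀ τ ∈ Set.Ici (0:ℝ),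
      (∑ j, 2 * ((starRingEnd ℂ) (A τ j) * d τ j).re)
        = -2 * a * E τ - 2 * h * (∑ j, (A τ j).im) := by
    intro τ hτ
    have : ∀ j, 2 * ((starRingEnd ℂ) (A τ j) * d τ j).re
        = -2*a*‖A τ j‖^2 - 2*h*(A τ j).im
          + 2*((starRingEnd ℂ) (A τ j) * lapC (A τ) j).im :=
      fun j => perj_algebra ξ a h ω (A τ j) (lapC (A τ) j) (d τ j) (heq τ hτ j)
    rw [Finset.sum_congr rfl (fun j _ => this j)]
    have hl := lap_im_sum N (A τ)
    simp only [Finset.sum_add_distrib, Finset.sum_sub_distrib, ← Finset.mul_sum, hl]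
    simp only [hE_def]
    ring
  -- the derivative bound: E' ≤ -a E + N h^2 / a
  have hbound : ∀ τ ∈ Set.Ici (0:ℝ),
      -2 * a * E τ - 2 * h * (∑ j, (A τ j).im) ≤ -a * E τ + N * h^2 / a := by
    intro τ hτ
    have hperj : ∀ j : ZMod N, -2*a*‖A τ j‖^2 - 2*h*(A τ j).im
        ≤ -a * ‖A τ j‖^2 + h^2/a := by
      intro j
      have him : (A τ j).im ^ 2 ≤ ‖A τ j‖ ^ 2 := by
        rw [Complex.sq_norm, Complex.normSq_apply]; nlinarith [sq_nonneg (A τ j).re]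
      have hcan : h^2/a * a = h^2 := div_mul_cancel₀ _ ha.ne'
      nlinarith [sq_nonneg (a * (A τ j).im + h), ha, mul_pos ha ha]
    calc -2 * a * E τ - 2 * h * (∑ j, (A τ j).im)
        = ∑ j, (-2*a*‖A τ j‖^2 - 2*h*(A τ j).im) := by
          simp only [hE_def, Finset.sum_sub_distrib, ← Finset.mul_sum]
      _ ≤ ∑ j : ZMod N, (-a * ‖A τ j‖^2 + h^2/a) :=
          Finset.sum_le_sum fun j _ => hperj j
      _ = -a * E τ + N * h^2 / a := by
          rw [Finset.sum_add_distrib, ← Finset.mul_sum]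
          simp [hE_def, Finset.card_univ, ZMod.card]
          ring
  -- Gronwall
  set G : ℝ → ℝ := fun t => (E t - C) * Real.exp (a * t) with hG_def
  have hGd : ∀ τ ∈ Set.Ici (0:ℝ),
      HasDerivWithinAt G
        (((∑ j, 2 * ((starRingEnd ℂ) (A τ j) * d τ j).re) + a * E τ - a * C) * Real.exp (a * τ))
        (Set.Ici 0) τ := by
    intro τ hτ
    have hexp : HasDerivAt (fun t : ℝ => Real.exp (a * t)) (a * Real.exp (a * τ)) τ := by
      have := ((hasDerivAt_id τ).const_mul a).exp
      simpa [mul_comm] using this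
    have := ((hEd τ hτ).sub_const C).fun_mul (hexp.hasDerivWithinAt)
    exact this.congr_deriv (by ring)
  have hG0 : ∀ x ∈ interior (Set.Ici (0:ℝ)), deriv G x ≤ 0 := by
    intro x hx
    rw [interior_Ici] at hx
    have hx' : (0:ℝ) ≤ x := le_of_lt hx
    have hmem : Set.Ici (0:ℝ) ∈ nhds x := Ici_mem_nhds hx
    have hGx : HasDerivAt G
        (((∑ j, 2 * ((starRingEnd ℂ) (A x j) * d x j).re) + a * E x - a * C) * Real.exp (a * x)) x :=
      (hGd x hx').hasDerivAt hmem
    rw [hGx.deriv]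
    have h1 : (∑ j, 2 * ((starRingEnd ℂ) (A x j) * d x j).re) + a * E x - a * C ≤ 0 := by
      rw [hval2 x hx']
      have := hbound x hx'
      have haC : a * C = N * h^2 / a := by
        rw [hC_def]; field_simp
      linarith
    have h2 : (0:ℝ) < Real.exp (a * x) := Real.exp_pos _
    exact mul_nonpos_of_nonpos_of_nonneg h1 h2.le
  have hGanti : AntitoneOn G (Set.Ici 0) := by
    apply antitoneOn_of_deriv_nonpos (convex_Ici 0)
    · exact fun x hx => ((hGd x hx).continuousWithinAt)
    · intro x hx
      rw [interior_Ici] at hx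
      exact ((hGd x (show (0:ℝ) ≤ x from hx.le)).hasDerivAt (Ici_mem_nhds hx)).differentiableAt.differentiableWithinAt
    · exact hG0
  intro τ hτ
  have hGle : G τ ≤ G 0 := hGanti (by simp) (by exact hτ) hτ
  have hG0v : G 0 = E 0 - C := by simp [hG_def]
  have hexp_pos : (0:ℝ) < Real.exp (a * τ) := Real.exp_pos _
  have hEτ : E τ ≤ C + (E 0 - C) * Real.exp (-a * τ) := by
    have hGτ : (E τ - C) * Real.exp (a * τ) ≤ E 0 - C := by rw [← hG0v]; exact hGle
    have : E τ - C ≤ (E 0 - C) * Real.exp (-a * τ) := by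
      rw [neg_mul, Real.exp_neg, ← div_eq_mul_inv, le_div_iff₀ hexp_pos]
      exact hGτ
    linarith
  have hCnn : 0 ≤ C := by positivity
  calc E τ ≤ C + (E 0 - C) * Real.exp (-a * τ) := hEτ
    _ ≤ C + E 0 * Real.exp (-a * τ) := by nlinarith [Real.exp_pos (-a * τ)]
end
end

section
/- Let A be a continuously differentiable solution of the damped, driven discrete nonlinear Schrödinger equation on an interval. Then the function τ ↦ ‖A(τ)‖² = Σ_j |A_j(τ)|² is differentiable and satisfies the identity (d/dτ)‖A(τ)‖² + 2α̂·‖A(τ)‖² = 2ĥ·Σ_j Im( conj(A_j(τ)) ) for every τ in the interval. -/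
open Complex Finset Set

noncomputable section

lemma alg_aux (ξ a h ω : ℝ) (z L : ℂ)
    (d : ℂ)
    (heq : Complex.I * d + 3 * (ξ : ℂ) * ((‖z‖ : ℂ)) ^ 2 * z
      - L + Complex.I * (a : ℂ) * z - (h : ℂ) + (ω : ℂ) * z = 0) :
    d * (starRingEnd ℂ) z + z * (starRingEnd ℂ) d
      = -Complex.I * (L * (starRingEnd ℂ) z - z * (starRingEnd ℂ) L)
        + ((2 * h * (((starRingEnd ℂ) z).im) - 2 * a * (‖z‖) ^ 2 : ℝ) : ℂ) := by
  have hd : d = Complex.I * (3 * (ξ : ℂ) * ((‖z‖ : ℂ)) ^ 2 * z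
      - L + Complex.I * (a : ℂ) * z - (h : ℂ) + (ω : ℂ) * z) := by
    linear_combination (-Complex.I) * heq + d * Complex.I_sq
  subst hd
  have habs : ((‖z‖ : ℂ)) ^ 2 = ((Complex.normSq z : ℝ) : ℂ) := by
    rw [← Complex.sq_norm]
    push_cast
    ring
  rw [habs]
  apply Complex.ext <;>
    simp [Complex.normSq_apply, Complex.mul_re, Complex.mul_im, Complex.sq_norm] <;>
    ring

lemma lap_key {N : ℕ} [NeZero N] (c : ZMod N → ℂ) :
    ∑ j, (lapC c j * (starRingEnd ℂ) (c j) - c j * (starRingEnd ℂ) (lapC c j)) = 0 := by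
  have h1 : ∑ j, c j * (starRingEnd ℂ) (c (j + 1))
      = ∑ j, c (j - 1) * (starRingEnd ℂ) (c j) := by
    apply Fintype.sum_equiv (Equiv.addRight (1 : ZMod N))
    intro j
    simp
  have h2 : ∑ j, c j * (starRingEnd ℂ) (c (j - 1))
      = ∑ j, c (j + 1) * (starRingEnd ℂ) (c j) := by
    apply Fintype.sum_equiv (Equiv.subRight (1 : ZMod N))
    intro j
    simp
  simp only [lapC, map_add, map_sub, map_mul]
  push_cast
  simp only [mul_add, mul_sub, add_mul, sub_mul]
  rw [Finset.sum_sub_distrib]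
  simp only [Finset.sum_add_distrib, Finset.sum_sub_distrib]
  rw [h1, h2]
  simp only [map_ofNat]
  have h3 : ∑ x, c x * ((2:ℂ) * (starRingEnd ℂ) (c x))
      = ∑ x, 2 * c x * (starRingEnd ℂ) (c x) :=
    Finset.sum_congr rfl (fun x _ => by ring)
  rw [h3]
  ring

/-- the energy identity
`(d/dτ)‖A(τ)‖² + 2α̂‖A(τ)‖² = 2ĥ Σ_j Im(conj(A_j(τ)))` for solutions of the
damped, driven DNLS equation on an interval `s`. -/
theorem stmt_3 (N : ℕ) [NeZero N] (ξ a h ω : ℝ) (ha : 0 < a)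
    (s : Set ℝ) (hs : s.OrdConnected)
    (A : ℝ → ZMod N → ℂ)
    (hreg : ∀ j, ContDiffOn ℝ 1 (fun t => A t j) s)
    (hsol : SolvesDNLSOn ξ a h ω A s) :
    ∀ τ ∈ s,
      HasDerivWithinAt (fun t => ∑ j, ‖A t j‖ ^ 2)
        (2 * h * ∑ j, ((starRingEnd ℂ) (A τ j)).im
          - 2 * a * ∑ j, ‖A τ j‖ ^ 2) s τ := by
  intro τ hτ
  choose d hd heq using hsol τ hτ
  -- derivative of each |A_j|^2
  have hterm : ∀ j : ZMod N, HasDerivWithinAt (fun t => ‖A t j‖ ^ 2)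
      ((d j * (starRingEnd ℂ) (A τ j) + A τ j * (starRingEnd ℂ) (d j)).re) s τ := by
    intro j
    have hstar : HasDerivWithinAt (fun t => (starRingEnd ℂ) (A t j))
        ((starRingEnd ℂ) (d j)) s τ := (hd j).star
    have hmul := (hd j).mul hstar
    have hre := Complex.reCLM.hasFDerivAt.comp_hasDerivWithinAt τ hmul
    have hfun : (⇑Complex.reCLM ∘ ((fun t => A t j) * fun t => (starRingEnd ℂ) (A t j)))
        = fun t => ‖A t j‖ ^ 2 := by
      funext t
      simp [Complex.mul_conj, Complex.sq_norm]
    rw [hfun] at hre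
    exact hre
  have hsum := HasDerivWithinAt.sum (u := Finset.univ)
    (fun j _ => hterm j)
  convert hsum using 1
  · rfl
  · rfl
  · ext t
    simp [Finset.sum_apply]
  -- identify the derivative value
  have hper : ∀ j : ZMod N, d j * (starRingEnd ℂ) (A τ j) + A τ j * (starRingEnd ℂ) (d j)
      = -Complex.I * (lapC (A τ) j * (starRingEnd ℂ) (A τ j)
          - A τ j * (starRingEnd ℂ) (lapC (A τ) j))
        + ((2 * h * (((starRingEnd ℂ) (A τ j)).im)
            - 2 * a * (‖A τ j‖) ^ 2 : ℝ) : ℂ) :=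
    fun j => alg_aux ξ a h ω (A τ j) (lapC (A τ) j) (d j) (heq j)
  have hT : ∑ j, (d j * (starRingEnd ℂ) (A τ j) + A τ j * (starRingEnd ℂ) (d j))
      = (((2 * h * ∑ j, ((starRingEnd ℂ) (A τ j)).im
          - 2 * a * ∑ j, ‖A τ j‖ ^ 2) : ℝ) : ℂ) := by
    rw [Finset.sum_congr rfl (fun j _ => hper j), Finset.sum_add_distrib,
      ← Finset.mul_sum, lap_key, mul_zero, zero_add]
    push_cast
    rw [Finset.sum_sub_distrib, ← Finset.mul_sum, ← Finset.mul_sum]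
  calc 2 * h * ∑ j, ((starRingEnd ℂ) (A τ j)).im
          - 2 * a * ∑ j, ‖A τ j‖ ^ 2
      = (∑ j, (d j * (starRingEnd ℂ) (A τ j) + A τ j * (starRingEnd ℂ) (d j))).re := by
        rw [hT, Complex.ofReal_re]
    _ = ∑ j, (d j * (starRingEnd ℂ) (A τ j) + A τ j * (starRingEnd ℂ) (d j)).re := by
        simp [Complex.re_sum]
end
end

section
/- Let A₀ ∈ ℓ²(ℤ/Nℤ; ℂ) and let A be the global solution of the damped, driven discrete nonlinear Schrödinger equation with A(0) = A₀. Then there exists a positive constant C_X, depending only on ‖A₀‖, ξ, ĥ, α̂, ω and N, such that for every ε ∈ (0,1) and every t ≥ 0 the leading-order rotating-wave approximation X satisfies ‖X(t)‖ + ‖X'(t)‖ ≤ √ε · C_X, where X'(t) is the derivative of X in t. -/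
open Complex Finset Set

noncomputable section

/-!
The ℓ² mass `y = ∑ |A_j|²` of a solution satisfies `y' = -2α̂ y - 2ĥ ∑ Im A_j`: the discrete
Laplacian is symmetric, so it contributes nothing. Hence `y' ≤ -α̂ y + N ĥ² / α̂`, and
`y(τ) ≤ max (y 0) (N ĥ² / α̂²)` for `τ ≥ 0`. This bounds every `|A_j|` and, through the equation,
every `|A_j'|` by constants depending only on `‖A₀‖`. With `u = A_j(εt/2) e^{iΩt}` one has
`X_j = Re (2√ε u + (ξ ε^{3/2} / 4) u³)`, and `ε^{3/2} ≤ √ε`, so `X_j` and `X_j'` are `O(√ε)`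
uniformly in `j` and `t ≥ 0`.
-/

theorem le_max_of_hasDerivAt_le_neg_mul_add {f f' : ℝ → ℝ} {a b : ℝ} (ha : 0 < a)
    (hf : ∀ t, HasDerivAt f (f' t) t) (hf' : ∀ t, f' t ≤ -a * f t + b) {t : ℝ} (ht : 0 ≤ t) :
    f t ≤ max (f 0) (b / a) := by
  have hg : ∀ s, HasDerivAt (fun s => (f s - b / a) * Real.exp (a * s))
      (Real.exp (a * s) * (f' s + a * f s - b)) s := by
    intro s
    have hexp : HasDerivAt (fun s => Real.exp (a * s)) (Real.exp (a * s) * a) s := by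
      simpa using ((hasDerivAt_id s).const_mul a).exp
    refine (((hf s).sub_const (b / a)).mul hexp).congr_deriv ?_
    field_simp
    ring
  have hanti := antitone_of_hasDerivAt_nonpos hg fun s =>
    mul_nonpos_of_nonneg_of_nonpos (Real.exp_pos _).le (by linarith [hf' s])
  have hgt : (f t - b / a) * Real.exp (a * t) ≤ f 0 - b / a := by
    simpa using hanti ht
  rcases le_or_gt (f t) (b / a) with hle | hlt
  · exact le_max_of_le_right hle
  · have : f t - b / a ≤ (f t - b / a) * Real.exp (a * t) :=
      le_mul_of_one_le_right (sub_nonneg.2 hlt.le) (Real.one_le_exp (by positivity))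
    exact le_max_of_le_left (by linarith)

theorem hasDerivAt_re_linear_add_cubic {u : ℝ → ℂ} {u' : ℂ} {t : ℝ} (hu : HasDerivAt u u' t)
    (p q : ℂ) :
    HasDerivAt (fun s => (p * u s + q * u s ^ 3).re) ((p + 3 * q * u t ^ 2) * u').re t := by
  have hpoly := (hu.const_mul p).add ((hu.fun_pow 3).const_mul q)
  refine (reCLM.hasFDerivAt.comp_hasDerivAt t hpoly).congr_deriv ?_
  simp only [reCLM_apply]
  ring_nf

theorem abs_re_linear_add_cubic_le {p q z : ℂ} {δ P Q M : ℝ} (hp : ‖p‖ ≤ δ * P)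
    (hq : ‖q‖ ≤ δ * Q) (hz : ‖z‖ ≤ M) :
    |(p * z + q * z ^ 3).re| ≤ δ * (P * M + Q * M ^ 3) := by
  have hM : 0 ≤ M := (norm_nonneg z).trans hz
  calc |(p * z + q * z ^ 3).re| ≤ ‖p‖ * ‖z‖ + ‖q‖ * ‖z‖ ^ 3 := by
        refine (abs_re_le_norm _).trans ((norm_add_le _ _).trans_eq ?_)
        rw [norm_mul, norm_mul, norm_pow]
    _ ≤ δ * P * M + δ * Q * M ^ 3 := by gcongr <;> linarith [norm_nonneg p, norm_nonneg q]
    _ = δ * (P * M + Q * M ^ 3) := by ring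

theorem abs_re_linear_add_cubic_deriv_le {p q z w : ℂ} {δ P Q M W : ℝ} (hp : ‖p‖ ≤ δ * P)
    (hq : ‖q‖ ≤ δ * Q) (hz : ‖z‖ ≤ M) (hw : ‖w‖ ≤ W) :
    |((p + 3 * q * z ^ 2) * w).re| ≤ δ * ((P + 3 * Q * M ^ 2) * W) := by
  have hM : 0 ≤ M := (norm_nonneg z).trans hz
  calc |((p + 3 * q * z ^ 2) * w).re| ≤ (‖p‖ + 3 * ‖q‖ * ‖z‖ ^ 2) * ‖w‖ := by
        refine (abs_re_le_norm _).trans ?_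
        rw [norm_mul]
        gcongr
        refine (norm_add_le _ _).trans_eq ?_
        rw [norm_mul, norm_mul, norm_pow, Complex.norm_ofNat]
    _ ≤ (δ * P + 3 * (δ * Q) * M ^ 2) * W := by
        have hQ : 0 ≤ δ * Q := (norm_nonneg q).trans hq
        have hz2 : ‖z‖ ^ 2 ≤ M ^ 2 := by gcongr
        refine mul_le_mul (add_le_add hp ?_) hw (norm_nonneg w) ?_
        · exact mul_le_mul (by linarith) hz2 (by positivity) (by linarith)
        · exact add_nonneg ((norm_nonneg p).trans hp) (by positivity)
    _ = δ * ((P + 3 * Q * M ^ 2) * W) := by ring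

open ComplexConjugate

namespace DNLS

variable {N : ℕ} {ξ a h ω ε : ℝ} {A : ℝ → ZMod N → ℂ}

def field (ξ a h ω : ℝ) (B : ZMod N → ℂ) (j : ZMod N) : ℂ :=
  3 * (ξ : ℂ) * ((‖B j‖ : ℂ)) ^ 2 * B j - lapC B j + I * (a : ℂ) * B j - (h : ℂ) + (ω : ℂ) * B j

theorem _root_.SolvesDNLS.hasDerivAt (hA : SolvesDNLS ξ a h ω A) (τ : ℝ) (j : ZMod N) :
    HasDerivAt (fun t => A t j) (I * field ξ a h ω (A τ) j) τ := by
  obtain ⟨d, hd, heq⟩ := hA τ j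
  convert hd using 1
  rw [field]
  linear_combination I * heq - d * I_sq

theorem norm_lapC_le {B : ZMod N → ℂ} {M : ℝ} (hB : ∀ k, ‖B k‖ ≤ M) (j : ZMod N) :
    ‖lapC B j‖ ≤ 4 * M := by
  rw [lapC]
  grw [norm_add_le, norm_sub_le, norm_mul, Complex.norm_ofNat, hB (j + 1), hB j, hB (j - 1)]
  linarith

theorem norm_field_le {B : ZMod N → ℂ} {M : ℝ} (hB : ∀ k, ‖B k‖ ≤ M)
    (j : ZMod N) :
    ‖field ξ a h ω B j‖ ≤ 3 * |ξ| * M ^ 3 + 4 * M + |a| * M + |h| + |ω| * M := by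
  have hM : ‖B j‖ ≤ M := hB j
  have hcubic : ‖3 * (ξ : ℂ) * ((‖B j‖ : ℂ)) ^ 2 * B j‖ ≤ 3 * |ξ| * M ^ 3 := by
    simp only [norm_mul, norm_pow, Complex.norm_real, Real.norm_eq_abs, abs_norm,
      Complex.norm_ofNat]
    calc 3 * |ξ| * ‖B j‖ ^ 2 * ‖B j‖ = 3 * |ξ| * ‖B j‖ ^ 3 := by ring
      _ ≤ 3 * |ξ| * M ^ 3 := by gcongr
  have hdamp : ‖I * (a : ℂ) * B j‖ ≤ |a| * M := by
    simp only [norm_mul, Complex.norm_I, one_mul, Complex.norm_real, Real.norm_eq_abs]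
    gcongr
  have hdet : ‖(ω : ℂ) * B j‖ ≤ |ω| * M := by
    simp only [norm_mul, Complex.norm_real, Real.norm_eq_abs]
    gcongr
  have hdrive : ‖(h : ℂ)‖ = |h| := by simp
  rw [field]
  grw [norm_add_le, norm_sub_le, norm_add_le, norm_sub_le, hcubic, norm_lapC_le hB j, hdamp,
    hdrive, hdet]

theorem sum_im_conj_mul_lapC [NeZero N] (B : ZMod N → ℂ) :
    ∑ j, (conj (B j) * lapC B j).im = 0 := by
  have hshift : ∑ j, (conj (B j) * B (j - 1)).im = ∑ j, (conj (B (j + 1)) * B j).im :=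
    Fintype.sum_equiv (Equiv.subRight 1) _ _ fun j => by simp
  have hexpand : ∀ j, (conj (B j) * lapC B j).im
      = (conj (B j) * B (j + 1)).im + (conj (B j) * B (j - 1)).im := by
    intro j
    simp only [lapC, mul_add, mul_sub, add_im, sub_im, mul_im, mul_re, conj_re, conj_im,
      re_ofNat, im_ofNat]
    ring
  rw [sum_congr rfl fun j _ => hexpand j, sum_add_distrib, hshift, ← sum_add_distrib]
  refine sum_eq_zero fun j _ => ?_
  simp only [mul_im, conj_re, conj_im]
  ring

theorem hasDerivAt_mass [NeZero N] (hA : SolvesDNLS ξ a h ω A) (τ : ℝ) :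
    HasDerivAt (fun t => ∑ j, ‖A t j‖ ^ 2)
      (∑ j, (-2 * a * ‖A τ j‖ ^ 2 - 2 * h * (A τ j).im)) τ := by
  have hpoint : ∀ j, 2 * inner ℝ (A τ j) (I * field ξ a h ω (A τ) j)
      = -2 * a * ‖A τ j‖ ^ 2 - 2 * h * (A τ j).im
        + 2 * (conj (A τ j) * lapC (A τ) j).im := by
    intro j
    simp only [Complex.inner, field, Complex.sq_norm, normSq_apply, ← ofReal_pow, mul_re,
      mul_im, add_re, add_im, sub_re, sub_im, I_re, I_im, ofReal_re, ofReal_im, conj_re,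
      conj_im, re_ofNat, im_ofNat]
    ring
  refine (HasDerivAt.fun_sum (u := univ) fun j _ => (hA.hasDerivAt τ j).norm_sq).congr_deriv ?_
  simp only [hpoint, sum_add_distrib, ← mul_sum, sum_im_conj_mul_lapC, mul_zero, add_zero]

theorem mass_deriv_le [NeZero N] (ha : 0 < a) (B : ZMod N → ℂ) :
    ∑ j, (-2 * a * ‖B j‖ ^ 2 - 2 * h * (B j).im) ≤ -a * ∑ j, ‖B j‖ ^ 2 + N * h ^ 2 / a := by
  have hpoint : ∀ j, -2 * a * ‖B j‖ ^ 2 - 2 * h * (B j).im ≤ -a * ‖B j‖ ^ 2 + h ^ 2 / a := by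
    intro j
    have him : (B j).im ^ 2 ≤ ‖B j‖ ^ 2 := by
      rw [Complex.sq_norm, normSq_apply]; nlinarith [sq_nonneg (B j).re]
    have hq : h ^ 2 / a * a = h ^ 2 := div_mul_cancel₀ _ ha.ne'
    nlinarith [sq_nonneg (a * (B j).im + h), mul_le_mul_of_nonneg_left him ha.le]
  calc _ ≤ ∑ j : ZMod N, (-a * ‖B j‖ ^ 2 + h ^ 2 / a) := sum_le_sum fun j _ => hpoint j
    _ = _ := by rw [sum_add_distrib, ← mul_sum, sum_const, card_univ, ZMod.card, nsmul_eq_mul]; ring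

theorem mass_le [NeZero N] (ha : 0 < a) (hA : SolvesDNLS ξ a h ω A) {τ : ℝ} (hτ : 0 ≤ τ) :
    ∑ j, ‖A τ j‖ ^ 2 ≤ max (∑ j, ‖A 0 j‖ ^ 2) (N * h ^ 2 / a ^ 2) := by
  have := le_max_of_hasDerivAt_le_neg_mul_add ha (hasDerivAt_mass hA)
    (fun t => mass_deriv_le ha (A t)) hτ
  rwa [div_div, ← sq] at this

theorem norm_le_of_solvesDNLS [NeZero N] (ha : 0 < a) (hA : SolvesDNLS ξ a h ω A) {τ : ℝ}
    (hτ : 0 ≤ τ) (j : ZMod N) :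
    ‖A τ j‖ ≤ √(l2C (A 0) ^ 2 + N * h ^ 2 / a ^ 2) := by
  have hj : ‖A τ j‖ ^ 2 ≤ ∑ k, ‖A τ k‖ ^ 2 :=
    single_le_sum (f := fun k => ‖A τ k‖ ^ 2) (fun k _ => by positivity) (mem_univ j)
  have h0 : l2C (A 0) ^ 2 = ∑ k, ‖A 0 k‖ ^ 2 := Real.sq_sqrt (by positivity)
  refine Real.le_sqrt_of_sq_le (hj.trans ((mass_le ha hA hτ).trans ?_))
  rw [h0]
  exact max_le_add_of_nonneg (by positivity) (by positivity)

def modulatedCarrier (ε ω : ℝ) (A : ℝ → ZMod N → ℂ) (j : ZMod N) (t : ℝ) : ℂ :=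
  A (ε * t / 2) j * exp (I * (((1 - ε * ω / 2) * t : ℝ) : ℂ))

theorem Xrw_eq_re (t : ℝ) (j : ZMod N) :
    Xrw ξ ω ε A t j = ((((2 * √ε : ℝ)) : ℂ) * modulatedCarrier ε ω A j t
      + ((ξ * ε ^ ((3 : ℝ) / 2) / 4 : ℝ) : ℂ) * modulatedCarrier ε ω A j t ^ 3).re := by
  have hcube : ∀ θ : ℂ, exp (3 * I * θ) = exp (I * θ) ^ 3 := fun θ => by
    rw [← exp_nat_mul]; push_cast; ring_nf
  rw [Xrw, modulatedCarrier, hcube]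
  simp only [mul_pow, mul_assoc, add_re, re_ofReal_mul]

theorem norm_modulatedCarrier (j : ZMod N) (t : ℝ) :
    ‖modulatedCarrier ε ω A j t‖ = ‖A (ε * t / 2) j‖ := by
  rw [modulatedCarrier, norm_mul, norm_exp_I_mul_ofReal, mul_one]

theorem exists_hasDerivAt_modulatedCarrier (hA : SolvesDNLS ξ a h ω A) (hε : 0 < ε) (hε1 : ε ≤ 1)
    (j : ZMod N) (t : ℝ) :
    ∃ u', HasDerivAt (modulatedCarrier ε ω A j) u' t ∧
      ‖u'‖ ≤ ‖field ξ a h ω (A (ε * t / 2)) j‖ + (1 + |ω| / 2) * ‖A (ε * t / 2) j‖ := by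
  set Ω := 1 - ε * ω / 2
  have hin : HasDerivAt (fun s : ℝ => ε * s / 2) (ε / 2) t := by
    simpa using ((hasDerivAt_id t).const_mul ε).div_const 2
  have henv := (hA.hasDerivAt (ε * t / 2) j).scomp t hin
  have hcar : HasDerivAt (fun s : ℝ => exp (I * ((Ω * s : ℝ) : ℂ)))
      (exp (I * ((Ω * t : ℝ) : ℂ)) * (I * Ω)) t := by
    simpa using (((hasDerivAt_id t).const_mul Ω).ofReal_comp.const_mul I).cexp
  refine ⟨_, henv.mul hcar, (norm_add_le _ _).trans ?_⟩
  have hΩ : |Ω| ≤ 1 + |ω| / 2 := by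
    calc |Ω| ≤ |1| + |ε * ω / 2| := abs_sub _ _
      _ ≤ 1 + |ω| / 2 := by
        rw [abs_one, abs_div, abs_mul, abs_of_pos hε, abs_two]
        gcongr
        nlinarith [abs_nonneg ω]
  simp only [norm_smul, norm_mul, norm_I, norm_exp_I_mul_ofReal, norm_real, Real.norm_eq_abs,
    one_mul, mul_one, abs_of_pos (half_pos hε), Function.comp_apply]
  refine add_le_add (mul_le_of_le_one_left (norm_nonneg _) (by linarith)) ?_
  rw [mul_comm]
  gcongr

theorem norm_cubicCoeff_le (ξ : ℝ) (hε : 0 < ε) (hε1 : ε ≤ 1) :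
    ‖((ξ * ε ^ ((3 : ℝ) / 2) / 4 : ℝ) : ℂ)‖ ≤ √ε * (|ξ| / 4) := by
  have hpow : ε ^ ((3 : ℝ) / 2) ≤ √ε := by
    rw [Real.sqrt_eq_rpow]
    exact Real.rpow_le_rpow_of_exponent_ge hε hε1 (by norm_num)
  rw [norm_real, Real.norm_eq_abs, abs_div, abs_mul, abs_of_nonneg (Real.rpow_nonneg hε.le _),
    abs_of_pos (four_pos : (0 : ℝ) < 4)]
  have := abs_nonneg ξ
  nlinarith

theorem norm_linearCoeff_le (ε : ℝ) : ‖((2 * √ε : ℝ) : ℂ)‖ ≤ √ε * 2 := by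
  rw [norm_real, Real.norm_eq_abs, abs_of_nonneg (by positivity), mul_comm]

theorem abs_Xrw_le (hε : 0 < ε) (hε1 : ε ≤ 1) {M : ℝ} {t : ℝ} {j : ZMod N}
    (hM : ‖A (ε * t / 2) j‖ ≤ M) :
    |Xrw ξ ω ε A t j| ≤ √ε * (2 * M + |ξ| / 4 * M ^ 3) := by
  rw [Xrw_eq_re]
  exact abs_re_linear_add_cubic_le (norm_linearCoeff_le ε) (norm_cubicCoeff_le ξ hε hε1)
    ((norm_modulatedCarrier j t).trans_le hM)

theorem abs_deriv_Xrw_le (hA : SolvesDNLS ξ a h ω A) (hε : 0 < ε) (hε1 : ε ≤ 1) {M : ℝ}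
    {t : ℝ} (hM : ∀ k, ‖A (ε * t / 2) k‖ ≤ M) (j : ZMod N) :
    |deriv (fun s => Xrw ξ ω ε A s j) t| ≤ √ε * ((2 + 3 * (|ξ| / 4) * M ^ 2)
      * (3 * |ξ| * M ^ 3 + 4 * M + |a| * M + |h| + |ω| * M + (1 + |ω| / 2) * M)) := by
  obtain ⟨u', hu, hu'⟩ := exists_hasDerivAt_modulatedCarrier hA hε hε1 j t
  have hX : (fun s => Xrw ξ ω ε A s j) = fun s => ((((2 * √ε : ℝ)) : ℂ) * modulatedCarrier ε ω A j s
      + ((ξ * ε ^ ((3 : ℝ) / 2) / 4 : ℝ) : ℂ) * modulatedCarrier ε ω A j s ^ 3).re :=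
    funext fun s => Xrw_eq_re s j
  rw [hX, (hasDerivAt_re_linear_add_cubic hu _ _).deriv]
  refine abs_re_linear_add_cubic_deriv_le (norm_linearCoeff_le ε) (norm_cubicCoeff_le ξ hε hε1)
    ((norm_modulatedCarrier j t).trans_le (hM j))
    (hu'.trans (add_le_add (norm_field_le hM j) (by gcongr; exact hM j)))

theorem l2R_le_sqrt_mul [NeZero N] {f : ZMod N → ℝ} {b : ℝ} (hf : ∀ j, |f j| ≤ b) :
    l2R f ≤ √N * b := by
  have hb : 0 ≤ b := (abs_nonneg _).trans (hf 0)
  have hsum : ∑ j, f j ^ 2 ≤ N * b ^ 2 := by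
    calc ∑ j, f j ^ 2 ≤ ∑ _j : ZMod N, b ^ 2 :=
          sum_le_sum fun j _ => sq_le_sq' (abs_le.1 (hf j)).1 (abs_le.1 (hf j)).2
      _ = N * b ^ 2 := by simp
  calc l2R f ≤ √(N * b ^ 2) := Real.sqrt_le_sqrt hsum
    _ = √N * b := by rw [Real.sqrt_mul (Nat.cast_nonneg N), Real.sqrt_sq hb]

def rotatingWaveBound (N : ℕ) (ξ a h ω M : ℝ) : ℝ :=
  √N * (2 * M + |ξ| / 4 * M ^ 3 + (2 + 3 * (|ξ| / 4) * M ^ 2)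
    * (3 * |ξ| * M ^ 3 + 4 * M + |a| * M + |h| + |ω| * M + (1 + |ω| / 2) * M))

theorem rotatingWaveBound_nonneg (N : ℕ) (ξ a h ω : ℝ) {M : ℝ} (hM : 0 ≤ M) :
    0 ≤ rotatingWaveBound N ξ a h ω M := by
  unfold rotatingWaveBound
  positivity

end DNLS

open DNLS

/-- bound on the rotating-wave approximation,
`‖X(t)‖ + ‖X'(t)‖ ≤ √ε C_X` for all `t ≥ 0` and `ε ∈ (0,1)`, where the positive
constant `C_X` depends only on `‖A₀‖` (and the fixed parameters `ξ, ĥ, α̂, ω, N`). -/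
theorem stmt_9 (N : ℕ) [NeZero N] (ξ a h ω : ℝ) (ha : 0 < a) :
    ∃ CX : ℝ → ℝ, (∀ r : ℝ, 0 < CX r) ∧
      ∀ (A₀ : ZMod N → ℂ) (A : ℝ → ZMod N → ℂ),
        SolvesDNLS ξ a h ω A → A 0 = A₀ →
        ∀ ε : ℝ, 0 < ε → ε < 1 → ∀ t : ℝ, 0 ≤ t →
          l2R (fun j => Xrw ξ ω ε A t j)
            + l2R (fun j => deriv (fun s => Xrw ξ ω ε A s j) t)
            ≤ Real.sqrt ε * CX (l2C A₀) := by
  refine ⟨fun r => rotatingWaveBound N ξ a h ω √(r ^ 2 + N * h ^ 2 / a ^ 2) + 1,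
    fun r => add_pos_of_nonneg_of_pos (rotatingWaveBound_nonneg _ _ _ _ _ (Real.sqrt_nonneg _))
      one_pos, ?_⟩
  rintro A₀ A hA rfl ε hε hε1 t ht
  set M := √(l2C (A 0) ^ 2 + N * h ^ 2 / a ^ 2)
  have hM : ∀ k, ‖A (ε * t / 2) k‖ ≤ M := norm_le_of_solvesDNLS ha hA (by positivity)
  have hX := l2R_le_sqrt_mul fun j => abs_Xrw_le (ξ := ξ) (ω := ω) hε hε1.le (hM j)
  have hV := l2R_le_sqrt_mul (abs_deriv_Xrw_le hA hε hε1.le hM)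
  calc _ ≤ √ε * rotatingWaveBound N ξ a h ω M :=
        (add_le_add hX hV).trans_eq (by rw [rotatingWaveBound]; ring)
    _ ≤ √ε * (rotatingWaveBound N ξ a h ω M + 1) := by gcongr; linarith
end
end

section
/- Let X : ℝ → (ℤ/Nℤ → ℝ) and R : ℝ → (ℤ/Nℤ → ℝ) be given functions, and let y : ℝ → (ℤ/Nℤ → ℝ) be twice differentiable and satisfy the error evolution equation y_j'' + y_j + ξ·( y_j³ + 3·X_j²·y_j + 3·X_j·y_j² ) − ε·(Δ₂y)_j + ε·α̂·y_j' + R_j(t) = 0 for all j and t. Define E(t) = (1/2)·Σ_j [ y_j'(t)² + y_j(t)² − 2ε·( y_j(t)·y_{j+1}(t) − y_j(t)² ) ]. Then E is differentiable and E'(t) = −Σ_j [ R_j(t) + ε·α̂·y_j'(t) + ξ·( y_j(t)³ + 3·X_j(t)²·y_j(t) + 3·X_j(t)·y_j(t)² ) ]·y_j'(t) for every t. -/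
open Complex Finset Set

noncomputable section

/-- The energy of the error term:
`E(t) = (1/2) Σ_j [y_j'(t)² + y_j(t)² − 2ε(y_j(t) y_{j+1}(t) − y_j(t)²)]`. -/
def energyE {N : ℕ} [NeZero N] (ε : ℝ) (y : ℝ → ZMod N → ℝ) (t : ℝ) : ℝ :=
  (1/2) * ∑ j, ((deriv (fun s => y s j) t) ^ 2 + (y t j) ^ 2
    - 2 * ε * (y t j * y t (j + 1) - (y t j) ^ 2))

/-- the rate of change of the energy of the error term:
`E'(t) = −Σ_j [R_j(t) + ε α̂ y_j'(t) + ξ(y_j³ + 3X_j²y_j + 3X_jy_j²)] y_j'(t)`. -/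
theorem stmt_13 (N : ℕ) [NeZero N] (ξ a ε : ℝ) (ha : 0 < a) (hε : 0 < ε) (hε1 : ε < 1)
    (X R : ℝ → ZMod N → ℝ) (y : ℝ → ZMod N → ℝ)
    (hy : ∀ j, ContDiff ℝ 2 (fun t => y t j))
    (heq : ∀ t : ℝ, ∀ j,
      iteratedDeriv 2 (fun s => y s j) t + y t j
        + ξ * ((y t j) ^ 3 + 3 * (X t j) ^ 2 * y t j + 3 * X t j * (y t j) ^ 2)
        - ε * lapR (y t) j + ε * a * deriv (fun s => y s j) t + R t j = 0) :
    ∀ t : ℝ,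
      HasDerivAt (energyE ε y)
        (-∑ j, (R t j + ε * a * deriv (fun s => y s j) t
          + ξ * ((y t j) ^ 3 + 3 * (X t j) ^ 2 * y t j + 3 * X t j * (y t j) ^ 2))
            * deriv (fun s => y s j) t) t := by
  intro t
  have hdiff : ∀ j, Differentiable ℝ (fun s => y s j) :=
    fun j => (hy j).differentiable (by norm_num)
  have hd1 : ∀ j, ∀ τ : ℝ, HasDerivAt (fun s => y s j) (deriv (fun s => y s j) τ) τ :=
    fun j τ => (hdiff j τ).hasDerivAt
  have hd2 : ∀ j, HasDerivAt (fun s => deriv (fun u => y u j) s)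
      (iteratedDeriv 2 (fun s => y s j) t) t := by
    intro j
    have h2 : ContDiff ℝ ((1 : ℕ∞) + 1) (fun s => y s j) := by
      have := hy j
      norm_num at this ⊢
      exact this
    have hder : ContDiff ℝ 1 (deriv (fun s => y s j)) :=
      ((contDiff_succ_iff_deriv).mp h2).2.2
    have h := ((hder.differentiable (by norm_num)) t).hasDerivAt
    rw [iteratedDeriv_succ, iteratedDeriv_one]
    exact h
  have hE : HasDerivAt (energyE ε y)
      ((1/2) * ∑ j, (2 * deriv (fun s => y s j) t * iteratedDeriv 2 (fun s => y s j) t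
        + 2 * y t j * deriv (fun s => y s j) t
        - 2 * ε * ((deriv (fun s => y s j) t * y t (j+1)
            + y t j * deriv (fun s => y s (j+1)) t)
          - 2 * y t j * deriv (fun s => y s j) t))) t := by
    unfold energyE
    apply HasDerivAt.const_mul
    apply HasDerivAt.fun_sum
    intro j _
    have hsq : HasDerivAt (fun s => (deriv (fun u => y u j) s) ^ 2)
        (2 * deriv (fun s => y s j) t * iteratedDeriv 2 (fun s => y s j) t) t := by
      have := (hd2 j).fun_pow 2
      simpa using this
    have hsq2 : HasDerivAt (fun s => (y s j) ^ 2)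
        (2 * y t j * deriv (fun s => y s j) t) t := by
      have := (hd1 j t).fun_pow 2
      simpa using this
    have hprod : HasDerivAt (fun s => y s j * y s (j+1))
        (deriv (fun s => y s j) t * y t (j+1) + y t j * deriv (fun s => y s (j+1)) t) t :=
      (hd1 j t).mul (hd1 (j+1) t)
    have hfinal := (hsq.fun_add hsq2).fun_sub ((hprod.fun_sub hsq2).const_mul (2 * ε))
    convert hfinal using 1
  have key : ((1/2) * ∑ j, (2 * deriv (fun s => y s j) t * iteratedDeriv 2 (fun s => y s j) t
        + 2 * y t j * deriv (fun s => y s j) t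
        - 2 * ε * ((deriv (fun s => y s j) t * y t (j+1)
            + y t j * deriv (fun s => y s (j+1)) t)
          - 2 * y t j * deriv (fun s => y s j) t)))
      = -∑ j, (R t j + ε * a * deriv (fun s => y s j) t
          + ξ * ((y t j) ^ 3 + 3 * (X t j) ^ 2 * y t j + 3 * X t j * (y t j) ^ 2))
            * deriv (fun s => y s j) t := by
    have hsummand : ∀ j : ZMod N,
        (1/2) * (2 * deriv (fun s => y s j) t * iteratedDeriv 2 (fun s => y s j) t
          + 2 * y t j * deriv (fun s => y s j) t
          - 2 * ε * ((deriv (fun s => y s j) t * y t (j+1)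
              + y t j * deriv (fun s => y s (j+1)) t)
            - 2 * y t j * deriv (fun s => y s j) t))
        = -((R t j + ε * a * deriv (fun s => y s j) t
            + ξ * ((y t j) ^ 3 + 3 * (X t j) ^ 2 * y t j + 3 * X t j * (y t j) ^ 2))
              * deriv (fun s => y s j) t)
          + ε * (deriv (fun s => y s j) t * y t (j-1)
            - y t j * deriv (fun s => y s (j+1)) t) := by
      intro j
      have h := heq t j
      simp only [lapR] at h
      linear_combination deriv (fun s => y s j) t * h
    have hshift : ∑ j : ZMod N, y t j * deriv (fun s => y s (j+1)) t
        = ∑ j : ZMod N, deriv (fun s => y s j) t * y t (j-1) := by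
      apply Fintype.sum_equiv (Equiv.addRight (1 : ZMod N))
      intro j
      simp [mul_comm]
    rw [Finset.mul_sum]
    rw [Finset.sum_congr rfl (fun j _ => hsummand j)]
    rw [Finset.sum_add_distrib, ← Finset.mul_sum, Finset.sum_sub_distrib, hshift]
    simp [Finset.sum_neg_distrib]
  rw [key] at hE
  exact hE
end
end

section
/- Let X : ℝ → (ℤ/Nℤ → ℝ) and R : ℝ → (ℤ/Nℤ → ℝ) be given functions, and let y : ℝ → (ℤ/Nℤ → ℝ) be twice differentiable and satisfy y_j'' + y_j + ξ·( y_j³ + 3·X_j²·y_j + 3·X_j·y_j² ) − ε·(Δ₂y)_j + ε·α̂·y_j' + R_j(t) = 0 for all j and t. Define E(t) = (1/2)·Σ_j [ y_j'(t)² + y_j(t)² − 2ε·( y_j(t)·y_{j+1}(t) − y_j(t)² ) ]. Then for every t the differential inequality E'(t) ≤ √2·‖R(t)‖·√E(t) + 2·[ ε·α̂ + 2|ξ|·E(t) + 3√2·|ξ|·‖X(t)‖·√E(t) + 3√2·|ξ|·‖X(t)‖² ]·E(t) holds, where ‖·‖ denotes the ℓ²(ℤ/Nℤ) norm. -/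
open Complex Finset Set

noncomputable section

set_option maxHeartbeats 2000000 in
/-- the energy differential inequality
`E'(t) ≤ √2 ‖R(t)‖ √E(t) + 2[ε α̂ + 2|ξ|E(t) + 3√2|ξ|‖X(t)‖√E(t) + 3√2|ξ|‖X(t)‖²] E(t)`. -/
theorem stmt_14 (N : ℕ) [NeZero N] (ξ a ε : ℝ) (ha : 0 < a) (hε : 0 < ε) (hε1 : ε < 1)
    (X R : ℝ → ZMod N → ℝ) (y : ℝ → ZMod N → ℝ)
    (hy : ∀ j, ContDiff ℝ 2 (fun t => y t j))
    (heq : ∀ t : ℝ, ∀ j,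
      iteratedDeriv 2 (fun s => y s j) t + y t j
        + ξ * ((y t j) ^ 3 + 3 * (X t j) ^ 2 * y t j + 3 * X t j * (y t j) ^ 2)
        - ε * lapR (y t) j + ε * a * deriv (fun s => y s j) t + R t j = 0) :
    ∀ t : ℝ,
      deriv (energyE ε y) t ≤
        Real.sqrt 2 * l2R (R t) * Real.sqrt (energyE ε y t)
          + 2 * (ε * a + 2 * |ξ| * energyE ε y t
              + 3 * Real.sqrt 2 * |ξ| * l2R (X t) * Real.sqrt (energyE ε y t)
              + 3 * Real.sqrt 2 * |ξ| * (l2R (X t)) ^ 2) * energyE ε y t := by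
  intro t
  set u : ZMod N → ℝ := fun j => y t j with hu_def
  set v : ZMod N → ℝ := fun j => deriv (fun s => y s j) t with hv_def
  set w : ZMod N → ℝ := fun j => iteratedDeriv 2 (fun s => y s j) t with hw_def
  have hu' : ∀ j, y t j = u j := fun j => rfl
  have hv' : ∀ j, deriv (fun s => y s j) t = v j := fun j => rfl
  have hw' : ∀ j, iteratedDeriv 2 (fun s => y s j) t = w j := fun j => rfl
  -- first derivatives
  have hdy : ∀ j, HasDerivAt (fun s => y s j) (v j) t := fun j =>
    (((hy j).differentiable (by norm_num)) t).hasDerivAt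
  -- second derivatives
  have hdv : ∀ j, HasDerivAt (fun s => deriv (fun s' => y s' j) s) (w j) t := by
    intro j
    have hf := hy j
    rw [show (2:WithTop ℕ∞) = 1 + 1 from rfl, contDiff_succ_iff_deriv] at hf
    have hd : Differentiable ℝ (deriv fun s => y s j) := hf.2.2.differentiable (by norm_num)
    have hwj : w j = deriv (deriv fun s => y s j) t := by
      rw [← hw', show (2:ℕ) = 1+1 from rfl, iteratedDeriv_succ, iteratedDeriv_one]
    rw [hwj]
    exact (hd t).hasDerivAt
  -- derivative of the energy
  have key1 : HasDerivAt (energyE ε y)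
      (∑ j, (v j * w j + u j * v j
        - ε * (v j * u (j+1) + u j * v (j+1) - 2 * (u j * v j)))) t := by
    have hterm : ∀ j : ZMod N, HasDerivAt
        (fun s => (deriv (fun s' => y s' j) s)^2 + (y s j)^2
          - 2*ε*(y s j * y s (j+1) - (y s j)^2))
        (2*(v j * w j + u j * v j
          - ε*(v j*u (j+1) + u j*v (j+1) - 2*(u j*v j)))) t := by
      intro j
      have h := (((hdv j).pow 2).add ((hdy j).pow 2)).sub
        ((((hdy j).mul (hdy (j+1))).sub ((hdy j).pow 2)).const_mul (2*ε))
      refine (h.congr_deriv ?_).congr_of_eventuallyEq (Filter.Eventually.of_forall fun s => rfl)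
      simp only [hu', hv', Nat.cast_ofNat, show (2:ℕ) - 1 = 1 from rfl, pow_one]
      ring
    have hsum := HasDerivAt.sum (fun j (_ : j ∈ (Finset.univ : Finset (ZMod N))) => hterm j)
    have h12 := hsum.const_mul (1/2 : ℝ)
    have h2 : (∑ j, (v j * w j + u j * v j
        - ε * (v j * u (j+1) + u j * v (j+1) - 2 * (u j * v j))))
        = (1/2) * ∑ j, (2*(v j * w j + u j * v j
          - ε*(v j*u (j+1) + u j*v (j+1) - 2*(u j*v j)))) := by
      rw [Finset.mul_sum]
      exact Finset.sum_congr rfl fun j _ => by ring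
    rw [h2]
    refine h12.congr_of_eventuallyEq (Filter.Eventually.of_forall fun s => ?_)
    simp only [energyE, Finset.sum_apply]
  have hshift : ∑ j : ZMod N, u j * v (j+1) = ∑ j : ZMod N, u (j-1) * v j := by
    apply Fintype.sum_equiv (Equiv.addRight (1 : ZMod N))
    intro j; simp
  have hE'2 : deriv (energyE ε y) t = ∑ j, v j * (w j + u j - ε * lapR u j) := by
    rw [key1.deriv]
    have l1 : ∀ j : ZMod N, v j * w j + u j * v j
        - ε * (v j * u (j+1) + u j * v (j+1) - 2*(u j * v j))
        = (v j * w j + u j * v j - ε * (v j * u (j+1) - 2*(u j*v j)))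
          - ε * (u j * v (j+1)) := fun j => by ring
    have l2 : ∀ j : ZMod N, v j * (w j + u j - ε * lapR u j)
        = (v j * w j + u j * v j - ε * (v j * u (j+1) - 2*(u j*v j)))
          - ε * (u (j-1) * v j) := fun j => by simp only [lapR]; ring
    simp only [l1, l2, Finset.sum_sub_distrib, ← Finset.mul_sum, hshift]
  have hsub : ∀ j : ZMod N, v j * (w j + u j - ε * lapR u j)
      = -(ξ * (v j * (u j^3 + 3*(X t j)^2*u j + 3*(X t j)*u j^2)))
        - ε*a*(v j^2) - v j * R t j := by
    intro j
    have h := heq t j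
    simp only [lapR, hu', hv', hw'] at h ⊢
    linear_combination (v j) * h
  have hE'3 : deriv (energyE ε y) t
      = -(ξ * ∑ j, v j * (u j^3 + 3*(X t j)^2*u j + 3*(X t j)*u j^2))
        - ε*a*(∑ j, v j^2) - ∑ j, v j * R t j := by
    rw [hE'2]
    simp only [hsub, Finset.sum_sub_distrib, Finset.sum_neg_distrib, ← Finset.mul_sum]
  -- abbreviations for the analysis
  set E : ℝ := energyE ε y t with hE_def
  set nX : ℝ := l2R (X t) with hnX_def
  set nR : ℝ := l2R (R t) with hnR_def
  set Q : ℝ := ∑ j, u j^2 with hQ_def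
  set S : ℝ := ∑ j, v j^2 with hS_def
  have hnX0 : 0 ≤ nX := Real.sqrt_nonneg _
  have hnR0 : 0 ≤ nR := Real.sqrt_nonneg _
  have hS0 : 0 ≤ S := Finset.sum_nonneg fun j _ => sq_nonneg _
  have hQ0 : 0 ≤ Q := Finset.sum_nonneg fun j _ => sq_nonneg _
  have hnX2 : nX^2 = ∑ j, (X t j)^2 := by
    rw [hnX_def]; exact Real.sq_sqrt (Finset.sum_nonneg fun j _ => sq_nonneg _)
  -- coercivity : S + Q ≤ 2 E
  have hEform : 2 * E = S + Q + 2*ε*(Q - ∑ j, u j * u (j+1)) := by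
    have hE1 : E = (1/2) * ∑ j, (v j^2 + u j^2 - 2*ε*(u j * u (j+1) - u j^2)) := by
      rw [hE_def, energyE]
    have l : ∀ j : ZMod N, v j^2 + u j^2 - 2*ε*(u j*u (j+1) - u j^2)
        = (v j^2 + (u j^2 + 2*ε*u j^2)) - 2*ε*(u j*u (j+1)) := fun j => by ring
    rw [hE1]
    simp only [l, Finset.sum_sub_distrib, Finset.sum_add_distrib, ← Finset.mul_sum]
    ring
  have hQshift : ∑ j : ZMod N, (u (j+1))^2 = Q := by
    rw [hQ_def]
    exact Fintype.sum_equiv (Equiv.addRight (1 : ZMod N)) _ _ (fun j => rfl)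
  have hcs0 : ∑ j, u j * u (j+1) ≤ Q := by
    have h2 := Real.sum_mul_le_sqrt_mul_sqrt Finset.univ u (fun j => u (j+1))
    rw [hQshift] at h2
    calc ∑ j, u j * u (j+1) ≤ Real.sqrt (∑ j, u j ^2) * Real.sqrt Q := h2
      _ = Q := by rw [← hQ_def, Real.mul_self_sqrt hQ0]
  have hSQ : S + Q ≤ 2*E := by nlinarith [mul_nonneg hε.le (sub_nonneg.2 hcs0)]
  have hE0 : 0 ≤ E := by linarith
  have hS2E : S ≤ 2*E := by linarith
  have hQ2E : Q ≤ 2*E := by linarith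
  have hsE2 : Real.sqrt E ^ 2 = E := Real.sq_sqrt hE0
  have hsS : Real.sqrt S ≤ Real.sqrt 2 * Real.sqrt E := by
    rw [← Real.sqrt_mul (by norm_num : (0:ℝ) ≤ 2) E]
    exact Real.sqrt_le_sqrt hS2E
  have hsQ : Real.sqrt Q ≤ Real.sqrt 2 * Real.sqrt E := by
    rw [← Real.sqrt_mul (by norm_num : (0:ℝ) ≤ 2) E]
    exact Real.sqrt_le_sqrt hQ2E
  have hm1 : Real.sqrt S * Real.sqrt Q ≤ 2*E := by
    calc Real.sqrt S * Real.sqrt Q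
        ≤ (Real.sqrt 2 * Real.sqrt E) * (Real.sqrt 2 * Real.sqrt E) :=
          mul_le_mul hsS hsQ (Real.sqrt_nonneg _) (by positivity)
      _ = 2 * (Real.sqrt E)^2 := by
          have : Real.sqrt 2 ^ 2 = 2 := Real.sq_sqrt (by norm_num)
          nlinarith [this]
      _ = 2*E := by rw [hsE2]
  -- pointwise bounds
  have hptu : ∀ j, u j^2 ≤ Q :=
    fun j => Finset.single_le_sum (f := fun j => u j^2) (fun i _ => sq_nonneg _) (Finset.mem_univ j)
  have hptv : ∀ j, v j^2 ≤ S :=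
    fun j => Finset.single_le_sum (f := fun j => v j^2) (fun i _ => sq_nonneg _) (Finset.mem_univ j)
  have habsu : ∀ j, |u j| ≤ Real.sqrt Q := fun j => by
    rw [← Real.sqrt_sq_eq_abs]; exact Real.sqrt_le_sqrt (hptu j)
  have habsv : ∀ j, |v j| ≤ Real.sqrt S := fun j => by
    rw [← Real.sqrt_sq_eq_abs]; exact Real.sqrt_le_sqrt (hptv j)
  -- Cauchy–Schwarz bounds
  have habs_cs : ∑ j, |v j| * |u j| ≤ Real.sqrt S * Real.sqrt Q := by
    have h := Real.sum_mul_le_sqrt_mul_sqrt Finset.univ (fun j => |v j|) (fun j => |u j|)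
    simpa [sq_abs] using h
  have habs_csX : ∑ j, |v j| * |X t j| ≤ Real.sqrt S * nX := by
    have h := Real.sum_mul_le_sqrt_mul_sqrt Finset.univ (fun j => |v j|) (fun j => |X t j|)
    simpa [sq_abs, hnX_def, l2R] using h
  have hB1 : |∑ j, v j * u j^3| ≤ Q * (Real.sqrt S * Real.sqrt Q) := by
    calc |∑ j, v j * u j^3| ≤ ∑ j, |v j * u j^3| := Finset.abs_sum_le_sum_abs _ _
      _ ≤ ∑ j, Q * (|v j| * |u j|) := by
          refine Finset.sum_le_sum fun j _ => ?_
          have h1 : |v j * u j^3| = (|v j| * |u j|) * u j^2 := by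
            rw [abs_mul, _root_.abs_pow, show |u j|^3 = |u j| * |u j|^2 from by ring, _root_.sq_abs]
            ring
          rw [h1]
          have := mul_le_mul_of_nonneg_left (hptu j) (mul_nonneg (abs_nonneg (v j)) (abs_nonneg (u j)))
          linarith [this]
      _ = Q * ∑ j, |v j| * |u j| := (Finset.mul_sum _ _ _).symm
      _ ≤ Q * (Real.sqrt S * Real.sqrt Q) := mul_le_mul_of_nonneg_left habs_cs hQ0
  have hB2 : |∑ j, v j * (X t j)^2 * u j| ≤ (Real.sqrt S * Real.sqrt Q) * nX^2 := by
    calc |∑ j, v j * (X t j)^2 * u j| ≤ ∑ j, |v j * (X t j)^2 * u j| :=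
          Finset.abs_sum_le_sum_abs _ _
      _ ≤ ∑ j, (Real.sqrt S * Real.sqrt Q) * (X t j)^2 := by
          refine Finset.sum_le_sum fun j _ => ?_
          have h1 : |v j * (X t j)^2 * u j| = (|v j| * |u j|) * (X t j)^2 := by
            rw [abs_mul, abs_mul, _root_.abs_pow, _root_.sq_abs]; ring
          rw [h1]
          have := mul_le_mul (habsv j) (habsu j) (abs_nonneg _) (Real.sqrt_nonneg _)
          exact mul_le_mul_of_nonneg_right this (sq_nonneg _)
      _ = (Real.sqrt S * Real.sqrt Q) * ∑ j, (X t j)^2 := (Finset.mul_sum _ _ _).symm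
      _ = (Real.sqrt S * Real.sqrt Q) * nX^2 := by rw [hnX2]
  have hB3 : |∑ j, v j * (X t j) * u j^2| ≤ Q * (Real.sqrt S * nX) := by
    calc |∑ j, v j * (X t j) * u j^2| ≤ ∑ j, |v j * (X t j) * u j^2| :=
          Finset.abs_sum_le_sum_abs _ _
      _ ≤ ∑ j, Q * (|v j| * |X t j|) := by
          refine Finset.sum_le_sum fun j _ => ?_
          have h1 : |v j * (X t j) * u j^2| = (|v j| * |X t j|) * u j^2 := by
            rw [abs_mul, abs_mul, _root_.abs_pow, _root_.sq_abs]
          rw [h1]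
          have := mul_le_mul_of_nonneg_left (hptu j)
            (mul_nonneg (abs_nonneg (v j)) (abs_nonneg (X t j)))
          linarith [this]
      _ = Q * ∑ j, |v j| * |X t j| := (Finset.mul_sum _ _ _).symm
      _ ≤ Q * (Real.sqrt S * nX) := mul_le_mul_of_nonneg_left habs_csX hQ0
  have hB4 : -(∑ j, v j * R t j) ≤ Real.sqrt S * nR := by
    have h := Real.sum_mul_le_sqrt_mul_sqrt Finset.univ (fun j => -v j) (R t)
    have h2 : ∑ j, (-v j) * R t j = -(∑ j, v j * R t j) := by
      rw [← Finset.sum_neg_distrib]; exact Finset.sum_congr rfl fun j _ => by ring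
    rw [h2] at h
    simpa [neg_pow, hnR_def, l2R] using h
  -- split the cubic sum
  have hPsplit : ∑ j, v j * (u j^3 + 3*(X t j)^2*u j + 3*(X t j)*u j^2)
      = (∑ j, v j * u j^3) + 3*(∑ j, v j * (X t j)^2 * u j) + 3*(∑ j, v j * (X t j) * u j^2) := by
    rw [Finset.mul_sum, Finset.mul_sum, ← Finset.sum_add_distrib, ← Finset.sum_add_distrib]
    exact Finset.sum_congr rfl fun j _ => by ring
  -- main estimate
  have haux : ∀ (T B : ℝ), |T| ≤ B → -(ξ*T) ≤ |ξ| * B := by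
    intro T B h
    calc -(ξ*T) ≤ |ξ*T| := neg_le_abs _
      _ = |ξ| * |T| := abs_mul _ _
      _ ≤ |ξ| * B := mul_le_mul_of_nonneg_left h (abs_nonneg ξ)
  have ht1 := haux _ _ hB1
  have ht2 := haux _ _ hB2
  have ht3 := haux _ _ hB3
  have hdamp : 0 ≤ ε*a*S := mul_nonneg (mul_nonneg hε.le ha.le) hS0
  have h_main : deriv (energyE ε y) t
      ≤ |ξ| * (Q * (Real.sqrt S * Real.sqrt Q))
        + 3 * (|ξ| * ((Real.sqrt S * Real.sqrt Q) * nX^2))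
        + 3 * (|ξ| * (Q * (Real.sqrt S * nX)))
        + Real.sqrt S * nR := by
    rw [hE'3, hPsplit]
    have expand : -(ξ * ((∑ j, v j * u j^3) + 3*(∑ j, v j * (X t j)^2 * u j)
          + 3*(∑ j, v j * (X t j) * u j^2)))
        = -(ξ * (∑ j, v j * u j^3)) + 3*(-(ξ * (∑ j, v j * (X t j)^2 * u j)))
          + 3*(-(ξ * (∑ j, v j * (X t j) * u j^2))) := by ring
    rw [expand]
    linarith [ht1, ht2, ht3, hB4, hdamp]
  -- final bounds
  have h1le2 : (1:ℝ) ≤ Real.sqrt 2 := by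
    rw [show (1:ℝ) = Real.sqrt 1 from (Real.sqrt_one).symm]
    exact Real.sqrt_le_sqrt (by norm_num)
  have b1 : |ξ| * (Q * (Real.sqrt S * Real.sqrt Q)) ≤ 2 * (2 * |ξ| * E) * E := by
    have c1 : Q * (Real.sqrt S * Real.sqrt Q) ≤ (2*E)*(2*E) :=
      mul_le_mul hQ2E hm1 (by positivity) (by linarith)
    calc |ξ| * (Q * (Real.sqrt S * Real.sqrt Q)) ≤ |ξ| * ((2*E)*(2*E)) :=
          mul_le_mul_of_nonneg_left c1 (abs_nonneg ξ)
      _ = 2 * (2 * |ξ| * E) * E := by ring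
  have b2 : 3 * (|ξ| * ((Real.sqrt S * Real.sqrt Q) * nX^2)) ≤ 2 * (3 * Real.sqrt 2 * |ξ| * nX^2) * E := by
    have c2 : (Real.sqrt S * Real.sqrt Q) * nX^2 ≤ (2*E)*nX^2 :=
      mul_le_mul_of_nonneg_right hm1 (sq_nonneg nX)
    have c3 : 3 * (|ξ| * ((Real.sqrt S * Real.sqrt Q) * nX^2)) ≤ 3 * (|ξ| * ((2*E)*nX^2)) := by
      have := mul_le_mul_of_nonneg_left c2 (abs_nonneg ξ)
      linarith
    refine c3.trans ?_
    nlinarith [mul_nonneg (mul_nonneg (abs_nonneg ξ) hE0) (sq_nonneg nX), h1le2]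
  have b3 : 3 * (|ξ| * (Q * (Real.sqrt S * nX))) ≤ 2 * (3 * Real.sqrt 2 * |ξ| * nX * Real.sqrt E) * E := by
    have c3 : Real.sqrt S * nX ≤ (Real.sqrt 2 * Real.sqrt E) * nX :=
      mul_le_mul_of_nonneg_right hsS hnX0
    have c4 : Q * (Real.sqrt S * nX) ≤ (2*E) * ((Real.sqrt 2 * Real.sqrt E) * nX) :=
      mul_le_mul hQ2E c3 (mul_nonneg (Real.sqrt_nonneg _) hnX0) (by linarith)
    calc 3 * (|ξ| * (Q * (Real.sqrt S * nX)))
        ≤ 3 * (|ξ| * ((2*E) * ((Real.sqrt 2 * Real.sqrt E) * nX))) := by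
          have := mul_le_mul_of_nonneg_left c4 (abs_nonneg ξ); linarith
      _ = 2 * (3 * Real.sqrt 2 * |ξ| * nX * Real.sqrt E) * E := by ring
  have b4 : Real.sqrt S * nR ≤ Real.sqrt 2 * nR * Real.sqrt E := by
    calc Real.sqrt S * nR ≤ (Real.sqrt 2 * Real.sqrt E) * nR :=
          mul_le_mul_of_nonneg_right hsS hnR0
      _ = Real.sqrt 2 * nR * Real.sqrt E := by ring
  have hEa : 0 ≤ 2*(ε*a)*E := by
    have := mul_nonneg (mul_nonneg hε.le ha.le) hE0
    nlinarith
  have htarget : Real.sqrt 2 * nR * Real.sqrt E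
      + 2 * (ε * a + 2 * |ξ| * E + 3 * Real.sqrt 2 * |ξ| * nX * Real.sqrt E
          + 3 * Real.sqrt 2 * |ξ| * nX^2) * E
      = 2*(ε*a)*E + 2 * (2 * |ξ| * E) * E + 2 * (3 * Real.sqrt 2 * |ξ| * nX * Real.sqrt E) * E
        + 2 * (3 * Real.sqrt 2 * |ξ| * nX^2) * E + Real.sqrt 2 * nR * Real.sqrt E := by ring
  linarith [h_main, b1, b2, b3, b4, hEa, htarget.ge, htarget.le]
end
end

section
/- Let A : [0,∞) → (ℤ/Nℤ → ℂ) be a continuously differentiable solution of the damped, driven discrete nonlinear Schrödinger equation. Then the ℓ² norm of A satisfies the differential inequality (d/dτ)‖A(τ)‖² + 2α̂·‖A(τ)‖² ≤ 2·|ĥ|·√N·‖A(τ)‖ for all τ ≥ 0. -/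
open Complex Finset Set

noncomputable section

lemma aux_pointwise_17 (z d L : ℂ) (ξ a h ω : ℝ)
    (heq : Complex.I * d + 3 * (ξ : ℂ) * ((‖z‖ : ℂ)) ^ 2 * z
      - L + Complex.I * (a : ℂ) * z - (h : ℂ) + (ω : ℂ) * z = 0) :
    2 * ((starRingEnd ℂ) z * d).re =
      -2 * (Complex.I * (starRingEnd ℂ) z * L).re - 2 * a * ‖z‖ ^ 2 - 2 * h * z.im := by
  have hd : d = Complex.I * (3 * (ξ : ℂ) * ((‖z‖ : ℂ)) ^ 2 * z
      - L + Complex.I * (a : ℂ) * z - (h : ℂ) + (ω : ℂ) * z) := by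
    linear_combination (-Complex.I) * heq + d * Complex.I_sq
  have habs : (‖z‖ : ℝ) ^ 2 = z.re ^ 2 + z.im ^ 2 := by
    rw [Complex.sq_norm, Complex.normSq_apply]; ring
  subst hd
  simp only [Complex.mul_re, Complex.mul_im, Complex.add_re, Complex.add_im, Complex.sub_re,
    Complex.sub_im, Complex.I_re, Complex.I_im, Complex.ofReal_re, Complex.ofReal_im,
    Complex.conj_re, Complex.conj_im, ← Complex.ofReal_pow, Complex.re_ofNat, Complex.im_ofNat]
  rw [habs]; ring

lemma aux_lap_sum_17 {N : ℕ} [NeZero N] (B : ZMod N → ℂ) :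
    ∑ j, (Complex.I * (starRingEnd ℂ) (B j) * lapC B j).re = 0 := by
  have hexp : ∀ j : ZMod N, (Complex.I * (starRingEnd ℂ) (B j) * lapC B j).re =
      (Complex.I * ((starRingEnd ℂ) (B j) * B (j+1))).re
      + (Complex.I * ((starRingEnd ℂ) (B j) * B (j-1))).re := by
    intro j
    simp only [lapC]
    simp only [Complex.mul_re, Complex.mul_im, Complex.add_re, Complex.add_im, Complex.sub_re,
      Complex.sub_im, Complex.I_re, Complex.I_im, Complex.conj_re, Complex.conj_im,
      Complex.re_ofNat, Complex.im_ofNat]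
    ring
  simp only [hexp]
  rw [Finset.sum_add_distrib]
  have hre : ∑ j, (Complex.I * ((starRingEnd ℂ) (B j) * B (j-1))).re
      = ∑ j, (Complex.I * ((starRingEnd ℂ) (B (j+1)) * B j)).re := by
    refine (Fintype.sum_equiv (Equiv.addRight (1:ZMod N))
      (fun j => (Complex.I * ((starRingEnd ℂ) (B (j+1)) * B j)).re)
      (fun j => (Complex.I * ((starRingEnd ℂ) (B j) * B (j-1))).re) ?_).symm
    intro x; simp
  rw [hre, ← Finset.sum_add_distrib]
  apply Finset.sum_eq_zero
  intro j _
  simp only [Complex.mul_re, Complex.mul_im, Complex.I_re, Complex.I_im, Complex.conj_re,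
    Complex.conj_im]
  ring

lemma aux_cs_17 {N : ℕ} [NeZero N] (z : ZMod N → ℂ) :
    |∑ j, (z j).im| ≤ Real.sqrt N * Real.sqrt (∑ j, ‖z j‖ ^ 2) := by
  rw [← Real.sqrt_mul (by positivity)]
  apply Real.abs_le_sqrt
  calc (∑ j, (z j).im) ^ 2 ≤ (Finset.univ (α := ZMod N)).card * ∑ j, (z j).im ^ 2 :=
        sq_sum_le_card_mul_sum_sq
    _ ≤ (N:ℝ) * ∑ j, ‖z j‖ ^ 2 := by
        rw [Finset.card_univ, ZMod.card]
        apply mul_le_mul_of_nonneg_left _ (by positivity)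
        apply Finset.sum_le_sum
        intro j _
        calc (z j).im ^ 2 = |(z j).im| ^ 2 := (_root_.sq_abs _).symm
          _ ≤ ‖z j‖ ^ 2 :=
            pow_le_pow_left₀ (abs_nonneg _) (Complex.abs_im_le_norm _) 2

/-- the differential inequality
`(d/dτ)‖A(τ)‖² + 2α̂‖A(τ)‖² ≤ 2|ĥ|√N ‖A(τ)‖` for solutions of the damped, driven DNLS
equation on `[0,∞)`. -/
theorem stmt_17 (N : ℕ) [NeZero N] (ξ a h ω : ℝ) (ha : 0 < a)
    (A : ℝ → ZMod N → ℂ)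
    (hreg : ∀ j, ContDiffOn ℝ 1 (fun t => A t j) (Set.Ici 0))
    (hsol : SolvesDNLSOn ξ a h ω A (Set.Ici 0)) :
    ∀ τ ∈ Set.Ici (0:ℝ), ∃ D : ℝ,
      HasDerivWithinAt (fun t => ∑ j, ‖A t j‖ ^ 2) D (Set.Ici 0) τ ∧
      D + 2 * a * ∑ j, ‖A τ j‖ ^ 2 ≤
        2 * |h| * Real.sqrt N * Real.sqrt (∑ j, ‖A τ j‖ ^ 2) := by
  intro τ hτ
  choose d hd heq using hsol τ hτ
  refine ⟨∑ j, 2 * ((starRingEnd ℂ) (A τ j) * d j).re, ?_, ?_⟩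
  · apply HasDerivWithinAt.fun_sum
    intro j _
    have hre := (Complex.reCLM.hasFDerivAt (x := A τ j)).comp_hasDerivWithinAt τ (hd j)
    have him := (Complex.imCLM.hasFDerivAt (x := A τ j)).comp_hasDerivWithinAt τ (hd j)
    have h2 := ((hre.fun_pow 2).fun_add (him.fun_pow 2))
    have hfun : (fun t => ((Complex.reCLM ∘ fun t => A t j) t) ^ 2
        + ((Complex.imCLM ∘ fun t => A t j) t) ^ 2)
        = fun t => ‖A t j‖ ^ 2 := by
      funext t
      simp [Function.comp, Complex.sq_norm, Complex.normSq_apply]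
      ring
    rw [hfun] at h2
    convert h2 using 1
    simp [Function.comp, Complex.mul_re, Complex.conj_re, Complex.conj_im]
    ring
  · have hsum : ∑ j, 2 * ((starRingEnd ℂ) (A τ j) * d j).re
        = -2 * a * (∑ j, ‖A τ j‖ ^ 2) - 2 * h * ∑ j, (A τ j).im := by
      have hpt : ∀ j, 2 * ((starRingEnd ℂ) (A τ j) * d j).re =
          -2 * (Complex.I * (starRingEnd ℂ) (A τ j) * lapC (A τ) j).re
            - 2 * a * ‖A τ j‖ ^ 2 - 2 * h * (A τ j).im :=
        fun j => aux_pointwise_17 _ _ _ ξ a h ω (heq j)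
      simp only [hpt]
      rw [Finset.sum_sub_distrib, Finset.sum_sub_distrib, ← Finset.mul_sum, ← Finset.mul_sum,
        ← Finset.mul_sum, aux_lap_sum_17]
      ring
    rw [hsum]
    set S := ∑ j, ‖A τ j‖ ^ 2 with hS
    have hS0 : 0 ≤ S := Finset.sum_nonneg fun j _ => sq_nonneg _
    have habs : |∑ j, (A τ j).im| ≤ Real.sqrt N * Real.sqrt S := aux_cs_17 (A τ)
    calc -2 * a * S - 2 * h * ∑ j, (A τ j).im + 2 * a * S
          = - (2 * h * ∑ j, (A τ j).im) := by ring
      _ ≤ |2 * h * ∑ j, (A τ j).im| := neg_le_abs _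
      _ = 2 * |h| * |∑ j, (A τ j).im| := by
          rw [abs_mul, abs_mul, _root_.abs_two]
      _ ≤ 2 * |h| * (Real.sqrt N * Real.sqrt S) := by
          apply mul_le_mul_of_nonneg_left habs (by positivity)
      _ = 2 * |h| * Real.sqrt N * Real.sqrt S := by ring
end
end
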